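/- arXiv:1509.04629 — 3 statements merged into one kernel-verified Lean document; each statement's English description precedes it below -/
import Mathlib

section
/- Let u_1,...,u_r ∈ ℝ^n be orthonormal vectors, L an n×n real matrix, and φ ∈ ℝ^{r×r} a skew-symmetric matrix (φ_{ij} = −φ_{ji}). Consider the constrained minimization of F(v_1,...,v_r) = Σ_{k=1}^r ‖v_k − L u_k‖² over all tuples (v_1,...,v_r) in (ℝ^n)^r satisfying the constraints v_i · u_j = φ_{ij} for all i,j = 1,...,r. Then the tuple defined by v_k* = L u_k − Σ_{j=1}^r ((L u_k · u_j) − φ_{kj}) u_j satisfies the constraints and is the unique minimizer of F over the constraint set. -/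
/-!
For each `k` separately, the constraint set `{v | ∀ j, ⟪v, u j⟫ = φ k j}` is an affine
subspace whose direction is the orthogonal complement of `span u`, and `v*ₖ` is the orthogonal
projection of `L uₖ` onto it. Pythagoras then gives
`F v = F v* + ∑ₖ ‖vₖ - v*ₖ‖²`, from which both minimality and uniqueness follow.
-/

open scoped RealInnerProductSpace

section OrthoCorrection

variable {E ι : Type*} [NormedAddCommGroup E] [InnerProductSpace ℝ E] [Fintype ι]
  {u : ι → E} {c : ι → ℝ}

/-- The point of `{v | ∀ j, ⟪v, u j⟫ = c j}` closest to `w`, when `u` is orthonormal. -/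
noncomputable def orthoCorrection (u : ι → E) (c : ι → ℝ) (w : E) : E :=
  w - ∑ j, (⟪w, u j⟫ - c j) • u j

theorem inner_orthoCorrection (hu : Orthonormal ℝ u) (w : E) (i : ι) :
    ⟪orthoCorrection u c w, u i⟫ = c i := by
  rw [orthoCorrection, inner_sub_left, hu.inner_left_fintype, conj_trivial]
  ring

theorem norm_sub_sq_eq_add_orthoCorrection (hu : Orthonormal ℝ u) {v : E}
    (hv : ∀ j, ⟪v, u j⟫ = c j) (w : E) :
    ‖v - w‖ ^ 2 =
      ‖v - orthoCorrection u c w‖ ^ 2 + ‖orthoCorrection u c w - w‖ ^ 2 := by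
  set p := orthoCorrection u c w
  have h_perp : ∀ j, ⟪v - p, u j⟫ = 0 := fun j => by
    rw [inner_sub_left, hv, inner_orthoCorrection hu, sub_self]
  have h_orth : ⟪v - p, p - w⟫ = 0 := by
    rw [show p - w = -∑ j, (⟪w, u j⟫ - c j) • u j from sub_sub_cancel_left _ _]
    simp only [inner_neg_right, inner_sum, real_inner_smul_right, h_perp, mul_zero,
      Finset.sum_const_zero, neg_zero]
  rw [← sub_add_sub_cancel v p w, norm_add_sq_real, h_orth]
  ring

theorem sum_norm_sub_sq_eq_add_orthoCorrection {κ : Type*} [Fintype κ]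
    (hu : Orthonormal ℝ u) {φ : κ → ι → ℝ} {v : κ → E} (hv : ∀ k j, ⟪v k, u j⟫ = φ k j)
    (w : κ → E) :
    ∑ k, ‖v k - w k‖ ^ 2 = ∑ k, ‖orthoCorrection u (φ k) (w k) - w k‖ ^ 2
      + ∑ k, ‖v k - orthoCorrection u (φ k) (w k)‖ ^ 2 := by
  rw [← Finset.sum_add_distrib]
  refine Finset.sum_congr rfl fun k _ => ?_
  rw [norm_sub_sq_eq_add_orthoCorrection hu (hv k)]
  ring

end OrthoCorrection

theorem eq_of_sum_norm_sub_sq_eq_zero {E κ : Type*} [NormedAddCommGroup E] [Fintype κ]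
    {v w : κ → E} (h : ∑ k, ‖v k - w k‖ ^ 2 = 0) : v = w := by
  funext k
  have hk := (Finset.sum_eq_zero_iff_of_nonneg fun k _ => sq_nonneg ‖v k - w k‖).mp h k
    (Finset.mem_univ k)
  rwa [sq_eq_zero_iff, norm_eq_zero, sub_eq_zero] at hk

theorem stmt1_general {n r : ℕ} (L : Matrix (Fin n) (Fin n) ℝ)
    (u : Fin r → EuclideanSpace ℝ (Fin n)) (hu : Orthonormal ℝ u)
    (φ : Matrix (Fin r) (Fin r) ℝ)
    (F : (Fin r → EuclideanSpace ℝ (Fin n)) → ℝ)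
    (hF : F = fun v => ∑ k, ‖v k - Matrix.toEuclideanLin L (u k)‖ ^ 2)
    (vstar : Fin r → EuclideanSpace ℝ (Fin n))
    (hvstar : vstar = fun k => Matrix.toEuclideanLin L (u k) -
      ∑ j, ((inner ℝ (Matrix.toEuclideanLin L (u k)) (u j) : ℝ) - φ k j) • u j) :
    (∀ i j, (inner ℝ (vstar i) (u j) : ℝ) = φ i j) ∧
      ∀ v : Fin r → EuclideanSpace ℝ (Fin n),
        (∀ i j, (inner ℝ (v i) (u j) : ℝ) = φ i j) →
          F vstar ≤ F v ∧ (F v = F vstar → v = vstar) := by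
  set w := fun k => Matrix.toEuclideanLin L (u k)
  have h_vstar : vstar = fun k => orthoCorrection u (φ k) (w k) := hvstar
  subst hF h_vstar
  refine ⟨fun i j => inner_orthoCorrection hu _ j, fun v hv => ?_⟩
  have h_split := sum_norm_sub_sq_eq_add_orthoCorrection hu hv w
  have h_excess_nonneg : 0 ≤ ∑ k, ‖v k - orthoCorrection u (φ k) (w k)‖ ^ 2 :=
    Finset.sum_nonneg fun k _ => sq_nonneg _
  refine ⟨by simp only; linarith, fun h_eq => eq_of_sum_norm_sub_sq_eq_zero ?_⟩
  simp only at h_eq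
  linarith

/-- Theorem 1 of the paper: given orthonormal vectors u₁,...,u_r, a matrix L and a
skew-symmetric φ, the tuple v*ₖ = L uₖ − Σⱼ ((L uₖ · uⱼ) − φₖⱼ) uⱼ satisfies the
constraints vᵢ · uⱼ = φᵢⱼ and is the unique minimizer of
F(v) = Σₖ ‖vₖ − L uₖ‖² over the constraint set. -/
theorem stmt1 {n r : ℕ} (L : Matrix (Fin n) (Fin n) ℝ)
    (u : Fin r → EuclideanSpace ℝ (Fin n)) (hu : Orthonormal ℝ u)
    (φ : Matrix (Fin r) (Fin r) ℝ) (hφ : ∀ i j, φ i j = -φ j i)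
    (F : (Fin r → EuclideanSpace ℝ (Fin n)) → ℝ)
    (hF : F = fun v => ∑ k, ‖v k - Matrix.toEuclideanLin L (u k)‖ ^ 2)
    (vstar : Fin r → EuclideanSpace ℝ (Fin n))
    (hvstar : vstar = fun k => Matrix.toEuclideanLin L (u k) -
      ∑ j, ((inner ℝ (Matrix.toEuclideanLin L (u k)) (u j) : ℝ) - φ k j) • u j) :
    (∀ i j, (inner ℝ (vstar i) (u j) : ℝ) = φ i j) ∧
      ∀ v : Fin r → EuclideanSpace ℝ (Fin n),
        (∀ i j, (inner ℝ (v i) (u j) : ℝ) = φ i j) →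
          F vstar ≤ F v ∧ (F v = F vstar → v = vstar) :=
  stmt1_general L u hu φ F hF vstar hvstar
end

section
/- Let L : ℝ → ℝ^{n×n} and Φ : ℝ → ℝ^{r×r} be continuous matrix-valued functions with Φ(t) skew-symmetric for every t. Suppose U : ℝ → ℝ^{n×r} is differentiable and satisfies the OTD evolution equation dU/dt = L(t)U − U(Uᵀ L(t) U − Φ(t)) with U(0)ᵀ U(0) = I (orthonormal initial columns). Then U(t)ᵀ U(t) = I for all t, i.e., the columns of U(t) remain orthonormal for all times. -/
/-!
The Gram defect `E = UᵀU - 1` satisfies the linear equation `E' = -(Cᵀ E + E C)` with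
`C = UᵀLU - Φ`: the inhomogeneous terms `Uᵀ(Lᵀ + L)U` cancel against `Cᵀ + C` exactly because
`Φ` is skew-symmetric. Since `E 0 = 0` and the coefficients are continuous, uniqueness for linear
ODEs (Grönwall on compact time intervals) gives `E ≡ 0`.
-/

open Matrix

attribute [local instance] Matrix.normedAddCommGroup Matrix.normedSpace

theorem eq_zero_of_linear_ODE {E : Type*} [NormedAddCommGroup E] [NormedSpace ℝ E]
    {A : ℝ → E →L[ℝ] E} (hA : Continuous A) {f : ℝ → E}
    (hf : ∀ t, HasDerivAt f (A t (f t)) t) {t₀ : ℝ} (h₀ : f t₀ = 0) : f = 0 := by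
  funext t
  obtain ⟨a, b, ht, ht₀⟩ : ∃ a b, t ∈ Set.Ioo a b ∧ t₀ ∈ Set.Ioo a b :=
    ⟨min t t₀ - 1, max t t₀ + 1, by grind, by grind⟩
  obtain ⟨M, hM⟩ := isCompact_Icc.exists_bound_of_continuousOn (s := Set.Icc a b) hA.continuousOn
  have hLip (s) (hs : s ∈ Set.Ioo a b) : LipschitzOnWith M.toNNReal (A s) Set.univ :=
    (ContinuousLinearMap.lipschitzWith_of_opNorm_le
      ((hM s (Set.Ioo_subset_Icc_self hs)).trans M.le_coe_toNNReal)).lipschitzOnWith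
  exact ODE_solution_unique_of_mem_Ioo hLip ht₀ (fun s _ => ⟨hf s, trivial⟩)
    (fun s _ => ⟨by simp, trivial⟩) h₀ ht

namespace Matrix

variable {l m n : Type*} [Fintype l] [Fintype m] [Fintype n]

section Deriv

variable {𝕜 : Type*} [NontriviallyNormedField 𝕜] [CompleteSpace 𝕜] {t : 𝕜}

theorem _root_.HasDerivAt.matrix_mul {A : 𝕜 → Matrix l m 𝕜} {B : 𝕜 → Matrix m n 𝕜}
    {A' : Matrix l m 𝕜} {B' : Matrix m n 𝕜} (hA : HasDerivAt A A' t) (hB : HasDerivAt B B' t) :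
    HasDerivAt (fun t => A t * B t) (A' * B t + A t * B') t := by
  rw [add_comm]
  exact (mulLinearMap 𝕜).toContinuousBilinearMap.hasDerivAt_of_bilinear (fun _ => hA) fun _ => hB

theorem _root_.HasDerivAt.matrix_transpose {A : 𝕜 → Matrix m n 𝕜} {A' : Matrix m n 𝕜}
    (hA : HasDerivAt A A' t) : HasDerivAt (fun t => (A t)ᵀ) A'ᵀ t :=
  (transposeLinearEquiv m n 𝕜 𝕜).toLinearMap.toContinuousLinearMap.hasFDerivAt.comp_hasDerivAt t hA

end Deriv

noncomputable def lyapunovOperator : Matrix n n ℝ →L[ℝ] Matrix n n ℝ →L[ℝ] Matrix n n ℝ :=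
  ((mulLinearMap ℝ).comp (transposeLinearEquiv n n ℝ ℝ).toLinearMap +
    (mulLinearMap ℝ).flip).toContinuousBilinearMap

@[simp]
theorem lyapunovOperator_apply (C X : Matrix n n ℝ) : lyapunovOperator C X = Cᵀ * X + X * C :=
  rfl

variable [DecidableEq n]

theorem otd_transpose_mul_add_transpose_mul_eq (L : Matrix m m ℝ) {Φ : Matrix n n ℝ}
    (hΦ : Φᵀ = -Φ) (U : Matrix m n ℝ) :
    (L * U - U * (Uᵀ * L * U - Φ))ᵀ * U + Uᵀ * (L * U - U * (Uᵀ * L * U - Φ)) =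
      -lyapunovOperator (Uᵀ * L * U - Φ) (Uᵀ * U - 1) := by
  simp only [lyapunovOperator_apply, transpose_sub, transpose_mul, transpose_transpose, hΦ,
    Matrix.mul_sub, Matrix.sub_mul, Matrix.mul_assoc, Matrix.mul_one, Matrix.one_mul,
    Matrix.neg_mul]
  abel

theorem _root_.HasDerivAt.transpose_mul_self_sub_one_of_otd {L : Matrix m m ℝ}
    {Φ : Matrix n n ℝ} (hΦ : Φᵀ = -Φ) {U : ℝ → Matrix m n ℝ} {t : ℝ}
    (hU : HasDerivAt U (L * U t - U t * ((U t)ᵀ * L * U t - Φ)) t) :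
    HasDerivAt (fun s => (U s)ᵀ * U s - 1)
      (-lyapunovOperator ((U t)ᵀ * L * U t - Φ) ((U t)ᵀ * U t - 1)) t := by
  rw [← otd_transpose_mul_add_transpose_mul_eq L hΦ]
  exact (hU.matrix_transpose.matrix_mul hU).sub_const 1

end Matrix

/-- An initially orthonormal basis evolved by the OTD equation
dU/dt = L(t)U − U(Uᵀ L(t) U − Φ(t)), with Φ(t) skew-symmetric, remains
orthonormal for all times. -/
theorem stmt2 {n r : ℕ} (L : ℝ → Matrix (Fin n) (Fin n) ℝ) (hL : Continuous L)
    (Φ : ℝ → Matrix (Fin r) (Fin r) ℝ) (hΦc : Continuous Φ)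
    (hΦ : ∀ t, (Φ t)ᵀ = -(Φ t))
    (U : ℝ → Matrix (Fin n) (Fin r) ℝ)
    (hU : ∀ t, HasDerivAt U (L t * U t - U t * ((U t)ᵀ * L t * U t - Φ t)) t)
    (h0 : (U 0)ᵀ * U 0 = 1) :
    ∀ t : ℝ, (U t)ᵀ * U t = 1 := by
  have hUc : Continuous U := continuous_iff_continuousAt.2 fun t => (hU t).continuousAt
  have hC : Continuous fun t => (U t)ᵀ * L t * U t - Φ t :=
    ((hUc.matrix_transpose.matrix_mul hL).matrix_mul hUc).sub hΦc
  have hgram := eq_zero_of_linear_ODE (lyapunovOperator.continuous.comp hC).neg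
    (fun t => (hU t).transpose_mul_self_sub_one_of_otd (hΦ t)) (t₀ := 0) (by simp [h0])
  exact fun t => sub_eq_zero.1 (congrFun hgram t)
end

section
/- Let L : ℝ → ℝ^{n×n} be continuous, let Φ_U, Φ_W : ℝ → ℝ^{r×r} be continuous skew-symmetric matrix functions, and let R_0 ∈ ℝ^{r×r} be an orthogonal matrix. Suppose W : ℝ → ℝ^{n×r} is a differentiable solution of dW/dt = L(t)W − W(Wᵀ L(t) W − Φ_W(t)) with W(t)ᵀW(t) = I for all t, and R : ℝ → ℝ^{r×r} solves dR/dt = R Φ_U(t) − Φ_W(t) R with R(0) = R_0. Then U(t) := W(t) R(t) is a differentiable solution of dU/dt = L(t)U − U(Uᵀ L(t) U − Φ_U(t)) with U(0) = W(0) R_0. In particular, two OTD subspaces evolved with different skew-symmetric gauge functions that are initially equivalent (equal up to right multiplication by an orthogonal matrix) remain equivalent for all t > 0. -/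
open Matrix

attribute [local instance] Matrix.normedAddCommGroup Matrix.normedSpace

/-!
Along the gauge equation for `R`, the Gram matrix `G = Rᵀ R` solves the linear ODE
`G' = G Φ_U - Φ_U G` (the skew-symmetry of `Φ_U` and `Φ_W` makes the `Φ_W` terms cancel), of
which the constant `1` is also a solution; uniqueness for linear ODEs with continuous
coefficients gives `Rᵀ R = 1` for all `t`. Then `(W R)(W R)ᵀ = W Wᵀ`, and the product rule turns
the OTD equation for `W` with gauge `Φ_W` into the one for `W R` with gauge `Φ_U`.
-/

section MatrixCalculus

variable {l m n : Type*} [Fintype l] [Fintype m] [Fintype n]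

noncomputable def Matrix.mulCLM :
    Matrix l m ℝ →L[ℝ] Matrix m n ℝ →L[ℝ] Matrix l n ℝ :=
  LinearMap.toContinuousLinearMap
    (LinearMap.toContinuousLinearMap.toLinearMap ∘ₗ mulLinearMap ℝ)

lemma HasDerivAt.matrix_mul_s4 {f : ℝ → Matrix l m ℝ} {g : ℝ → Matrix m n ℝ} {f' g'} {t : ℝ}
    (hf : HasDerivAt f f' t) (hg : HasDerivAt g g' t) :
    HasDerivAt (fun s => f s * g s) (f' * g t + f t * g') t := by
  rw [add_comm]
  exact mulCLM.hasDerivAt_of_bilinear (fun _ => hf) (fun _ => hg)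

lemma HasDerivAt.matrix_transpose_s4 {f : ℝ → Matrix m n ℝ} {f'} {t : ℝ}
    (hf : HasDerivAt f f' t) : HasDerivAt (fun s => (f s)ᵀ) f'ᵀ t :=
  ((transposeLinearEquiv m n ℝ ℝ).toContinuousLinearEquiv :
    Matrix m n ℝ →L[ℝ] Matrix n m ℝ).hasFDerivAt.comp_hasDerivAt t hf

end MatrixCalculus

theorem ODE_solution_unique_of_continuous_linear {E : Type*} [NormedAddCommGroup E]
    [NormedSpace ℝ E] {A : ℝ → E →L[ℝ] E} (hA : Continuous A) {f g : ℝ → E} {t₀ : ℝ}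
    (hf : ∀ t, HasDerivAt f (A t (f t)) t) (hg : ∀ t, HasDerivAt g (A t (g t)) t)
    (heq : f t₀ = g t₀) : f = g := by
  ext t
  obtain ⟨a, b, ht, ht₀⟩ : ∃ a b, t ∈ Set.Ioo a b ∧ t₀ ∈ Set.Ioo a b := by
    use min (-|t|) (-|t₀|) - 1, max |t| |t₀| + 1
    grind
  obtain ⟨C, hC⟩ := (isCompact_Icc (a := a) (b := b)).exists_bound_of_continuousOn
    hA.continuousOn
  have hLip : ∀ s ∈ Set.Ioo a b, LipschitzOnWith C.toNNReal (A s) Set.univ := fun s hs =>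
    (ContinuousLinearMap.lipschitzWith_of_opNorm_le
      ((hC s (Set.Ioo_subset_Icc_self hs)).trans (Real.le_coe_toNNReal C))).lipschitzOnWith
  exact ODE_solution_unique_of_mem_Ioo hLip ht₀ (fun s _ => ⟨hf s, trivial⟩)
    (fun s _ => ⟨hg s, trivial⟩) heq ht

section Gauge

variable {m : Type*} [Fintype m] [DecidableEq m]

theorem eq_one_of_hasDerivAt_commutator {Φ : ℝ → Matrix m m ℝ} (hΦ : Continuous Φ)
    {G : ℝ → Matrix m m ℝ} (hG : ∀ t, HasDerivAt G (G t * Φ t - Φ t * G t) t) {t₀ : ℝ}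
    (hG₀ : G t₀ = 1) (t : ℝ) : G t = 1 := by
  set A : ℝ → Matrix m m ℝ →L[ℝ] Matrix m m ℝ := fun t =>
    LinearMap.toContinuousLinearMap (LinearMap.mulRight ℝ (Φ t) - LinearMap.mulLeft ℝ (Φ t))
  have hA : Continuous A := continuous_clm_apply.mpr fun X => by
    change Continuous fun t => X * Φ t - Φ t * X
    fun_prop
  have hone : ∀ t, HasDerivAt (fun _ => (1 : Matrix m m ℝ)) (1 * Φ t - Φ t * 1) t := fun t => by
    rw [one_mul, mul_one, sub_self]
    exact hasDerivAt_const t 1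
  exact congrFun (ODE_solution_unique_of_continuous_linear hA hG hone hG₀) t

theorem hasDerivAt_transpose_mul_self_of_gauge {ΦU ΦW R : ℝ → Matrix m m ℝ} {t : ℝ}
    (hΦU : (ΦU t)ᵀ = -ΦU t) (hΦW : (ΦW t)ᵀ = -ΦW t)
    (hR : HasDerivAt R (R t * ΦU t - ΦW t * R t) t) :
    HasDerivAt (fun s => (R s)ᵀ * R s)
      ((R t)ᵀ * R t * ΦU t - ΦU t * ((R t)ᵀ * R t)) t := by
  convert hR.matrix_transpose_s4.matrix_mul_s4 hR using 1
  simp only [transpose_sub, transpose_mul, hΦU, hΦW]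
  noncomm_ring

end Gauge

section OTD

variable {n r : Type*} [Fintype n] [Fintype r] [DecidableEq r]

def otdField (L : Matrix n n ℝ) (Φ : Matrix r r ℝ) (U : Matrix n r ℝ) : Matrix n r ℝ :=
  L * U - U * (Uᵀ * L * U - Φ)

theorem otdField_mul_orthogonal (L : Matrix n n ℝ) (ΦU ΦW : Matrix r r ℝ) (W : Matrix n r ℝ)
    {R : Matrix r r ℝ} (hR : R * Rᵀ = 1) :
    otdField L ΦW W * R + W * (R * ΦU - ΦW * R) = otdField L ΦU (W * R) := by
  have hproj : W * R * ((W * R)ᵀ * L * (W * R)) = W * (Wᵀ * L * W) * R := by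
    simp only [transpose_mul, ← Matrix.mul_assoc]
    rw [Matrix.mul_assoc W R, hR, Matrix.mul_one]
  simp only [otdField, Matrix.mul_sub, Matrix.sub_mul, hproj]
  simp only [Matrix.mul_assoc]
  abel

theorem hasDerivAt_otd_mul_of_gauge {L : ℝ → Matrix n n ℝ} {ΦU ΦW : ℝ → Matrix r r ℝ}
    {W : ℝ → Matrix n r ℝ} {R : ℝ → Matrix r r ℝ} {t : ℝ}
    (hW : HasDerivAt W (otdField (L t) (ΦW t) (W t)) t)
    (hR : HasDerivAt R (R t * ΦU t - ΦW t * R t) t) (hRo : R t * (R t)ᵀ = 1) :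
    HasDerivAt (fun s => W s * R s) (otdField (L t) (ΦU t) (W t * R t)) t := by
  rw [← otdField_mul_orthogonal _ _ _ _ hRo]
  exact hW.matrix_mul_s4 hR

end OTD

theorem stmt4_general {n r : ℕ} (L : ℝ → Matrix (Fin n) (Fin n) ℝ)
    (ΦU ΦW : ℝ → Matrix (Fin r) (Fin r) ℝ)
    (hΦUc : Continuous ΦU)
    (hΦU : ∀ t, (ΦU t)ᵀ = -(ΦU t)) (hΦW : ∀ t, (ΦW t)ᵀ = -(ΦW t))
    (R0 : Matrix (Fin r) (Fin r) ℝ) (hR0 : R0ᵀ * R0 = 1)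
    (W : ℝ → Matrix (Fin n) (Fin r) ℝ)
    (hW : ∀ t, HasDerivAt W (L t * W t - W t * ((W t)ᵀ * L t * W t - ΦW t)) t)
    (R : ℝ → Matrix (Fin r) (Fin r) ℝ)
    (hR : ∀ t, HasDerivAt R (R t * ΦU t - ΦW t * R t) t)
    (hRinit : R 0 = R0) :
    (∀ t, HasDerivAt (fun s => W s * R s)
        (L t * (W t * R t) -
          (W t * R t) * ((W t * R t)ᵀ * L t * (W t * R t) - ΦU t)) t) ∧
      W 0 * R 0 = W 0 * R0 ∧
      ∀ t > (0 : ℝ), (R t)ᵀ * R t = 1 := by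
  have hRo : ∀ t, (R t)ᵀ * R t = 1 :=
    eq_one_of_hasDerivAt_commutator hΦUc
      (fun t => hasDerivAt_transpose_mul_self_of_gauge (hΦU t) (hΦW t) (hR t))
      (by rw [hRinit, hR0])
  exact ⟨fun t => hasDerivAt_otd_mul_of_gauge (hW t) (hR t) (mul_eq_one_comm.mp (hRo t)),
    by rw [hRinit], fun t _ => hRo t⟩

/-- Theorem 2 of the paper: if W solves the OTD equation with gauge Φ_W and has
orthonormal columns, and R solves dR/dt = R Φ_U(t) − Φ_W(t) R with orthogonal initial
condition R(0) = R₀, then U := W·R solves the OTD equation with gauge Φ_U,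
U(0) = W(0)·R₀, and the two subspaces remain equivalent (R(t) stays orthogonal)
for all t > 0. -/
theorem stmt4 {n r : ℕ} (L : ℝ → Matrix (Fin n) (Fin n) ℝ) (hL : Continuous L)
    (ΦU ΦW : ℝ → Matrix (Fin r) (Fin r) ℝ)
    (hΦUc : Continuous ΦU) (hΦWc : Continuous ΦW)
    (hΦU : ∀ t, (ΦU t)ᵀ = -(ΦU t)) (hΦW : ∀ t, (ΦW t)ᵀ = -(ΦW t))
    (R0 : Matrix (Fin r) (Fin r) ℝ) (hR0 : R0ᵀ * R0 = 1)
    (W : ℝ → Matrix (Fin n) (Fin r) ℝ)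
    (hW : ∀ t, HasDerivAt W (L t * W t - W t * ((W t)ᵀ * L t * W t - ΦW t)) t)
    (hWo : ∀ t, (W t)ᵀ * W t = 1)
    (R : ℝ → Matrix (Fin r) (Fin r) ℝ)
    (hR : ∀ t, HasDerivAt R (R t * ΦU t - ΦW t * R t) t)
    (hRinit : R 0 = R0) :
    (∀ t, HasDerivAt (fun s => W s * R s)
        (L t * (W t * R t) -
          (W t * R t) * ((W t * R t)ᵀ * L t * (W t * R t) - ΦU t)) t) ∧
      W 0 * R 0 = W 0 * R0 ∧
      ∀ t > (0 : ℝ), (R t)ᵀ * R t = 1 :=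
  stmt4_general L ΦU ΦW hΦUc hΦU hΦW R0 hR0 W hW R hR hRinit
end
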